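/- arXiv:1810.00506 — 9 statements merged into one kernel-verified Lean document; each statement's English description precedes it below -/
import Mathlib

section
/- Let H be a finite set of hypotheses on a finite nonempty example set X, let P be a probability distribution on X with P(x) > 0 for all x, let MAJ_H be a majority function for H, and let ĥ ∈ H be a best majority hypothesis (a maximizer over h ∈ H of P({x : h(x) = MAJ_H(x)})). Then for every hypothesis h* ∈ H with h* ≠ ĥ, letting A = {x ∈ X : ĥ(x) ≠ h*(x)}, we have P({x ∈ A : h*(x) ≠ MAJ_H(x)}) ≥ (1/2)·P(A). -/
/-!
Write `A` for the set where `ĥ` and `h*` disagree. Off `A` the two hypotheses agree with the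
majority at exactly the same points, so the optimality of `ĥ` forces `P(A ∩ {h* = MAJ}) ≤
P(A ∩ {ĥ = MAJ})`. On `A`, wherever `ĥ` is the majority vote `h*` is not, hence
`P(A ∩ {h* = MAJ}) ≤ P(A ∩ {h* ≠ MAJ})`, and the two sides add up to `P(A)`.
-/

open Finset

namespace Finset

variable {X α β : Type*} [DecidableEq α] [AddCommMonoid β] (s : Finset X) (w : X → β)
  (f g M : X → α)

theorem sum_filter_eq_add_sum_filter_eq_add_sum_filter_ne (k : X → α) :
    ∑ x ∈ s.filter (fun x => k x = M x), w x
      = ∑ x ∈ s.filter (fun x => f x = g x ∧ k x = M x), w x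
        + ∑ x ∈ s.filter (fun x => f x ≠ g x ∧ k x = M x), w x := by
  rw [← sum_filter_add_sum_filter_not (s.filter fun x => k x = M x) (fun x => f x = g x),
    filter_filter, filter_filter]
  congr 2 <;> exact filter_congr fun x _ => and_comm

theorem sum_filter_ne_and_eq_le_of_sum_filter_eq_le [PartialOrder β] [IsOrderedCancelAddMonoid β]
    (h : ∑ x ∈ s.filter (fun x => g x = M x), w x ≤ ∑ x ∈ s.filter (fun x => f x = M x), w x) :
    ∑ x ∈ s.filter (fun x => f x ≠ g x ∧ g x = M x), w x
      ≤ ∑ x ∈ s.filter (fun x => f x ≠ g x ∧ f x = M x), w x := by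
  have agree : s.filter (fun x => f x = g x ∧ g x = M x)
      = s.filter (fun x => f x = g x ∧ f x = M x) :=
    filter_congr fun x _ => and_congr_right fun hfg => by rw [hfg]
  rw [sum_filter_eq_add_sum_filter_eq_add_sum_filter_ne s w f g M g,
    sum_filter_eq_add_sum_filter_eq_add_sum_filter_ne s w f g M f, agree] at h
  exact le_of_add_le_add_left h

theorem sum_filter_ne_and_eq_le_sum_filter_ne_and_ne [PartialOrder β] [IsOrderedCancelAddMonoid β]
    (hw : ∀ x ∈ s, 0 ≤ w x)
    (h : ∑ x ∈ s.filter (fun x => g x = M x), w x ≤ ∑ x ∈ s.filter (fun x => f x = M x), w x) :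
    ∑ x ∈ s.filter (fun x => f x ≠ g x ∧ g x = M x), w x
      ≤ ∑ x ∈ s.filter (fun x => f x ≠ g x ∧ g x ≠ M x), w x := by
  refine (sum_filter_ne_and_eq_le_of_sum_filter_eq_le s w f g M h).trans ?_
  refine sum_le_sum_of_subset_of_nonneg ?_ fun x hx _ => hw x (mem_filter.1 hx).1
  intro x hx
  simp only [mem_filter] at hx ⊢
  obtain ⟨hxs, hfg, hfM⟩ := hx
  exact ⟨hxs, hfg, fun hgM => hfg (hfM.trans hgM.symm)⟩

end Finset

theorem majority_lemma1_general
    {X : Type*} [Fintype X]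
    (H : Finset (X → ℕ))
    (P : X → ℝ)
    (hPpos : ∀ x, 0 < P x)
    (M : X → ℕ)
    (hhat : X → ℕ)
    (hbest : ∀ h ∈ H,
      ∑ x ∈ univ.filter (fun x => h x = M x), P x
        ≤ ∑ x ∈ univ.filter (fun x => hhat x = M x), P x)
    (hstar : X → ℕ) (hstarH : hstar ∈ H) :
    (1 / 2) * ∑ x ∈ univ.filter (fun x => hhat x ≠ hstar x), P x
      ≤ ∑ x ∈ univ.filter (fun x => hhat x ≠ hstar x ∧ hstar x ≠ M x), P x := by
  have split : ∑ x ∈ univ.filter (fun x => hhat x ≠ hstar x), P x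
      = ∑ x ∈ univ.filter (fun x => hhat x ≠ hstar x ∧ hstar x = M x), P x
        + ∑ x ∈ univ.filter (fun x => hhat x ≠ hstar x ∧ hstar x ≠ M x), P x := by
    simp only [← filter_filter]
    exact (sum_filter_add_sum_filter_not _ _ _).symm
  have key := sum_filter_ne_and_eq_le_sum_filter_ne_and_ne univ P hhat hstar M
    (fun x _ => (hPpos x).le) (hbest hstar hstarH)
  linarith

/-- **Lemma 1 (Majority algorithm).** If `hhat` is a best majority hypothesis, then for any
`hstar ∈ H` with `hstar ≠ hhat`, the probability (under `P`) that a counter-example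
`x ∈ A = {x : hhat x ≠ hstar x}` satisfies `hstar x ≠ MAJ_H x` is at least half of `P A`. -/
theorem majority_lemma1
    {X : Type*} [Fintype X] [Nonempty X] [DecidableEq X]
    (H : Finset (X → ℕ))
    (P : X → ℝ)
    (hPpos : ∀ x, 0 < P x)
    (hPsum : ∑ x, P x = 1)
    (M : X → ℕ)
    (hM : ∀ (x : X) (v : ℕ),
      (H.filter (fun h => h x = v)).card ≤ (H.filter (fun h => h x = M x)).card)
    (hhat : X → ℕ) (hhatH : hhat ∈ H)
    (hbest : ∀ h ∈ H,
      ∑ x ∈ univ.filter (fun x => h x = M x), P x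
        ≤ ∑ x ∈ univ.filter (fun x => hhat x = M x), P x)
    (hstar : X → ℕ) (hstarH : hstar ∈ H) (hne : hstar ≠ hhat) :
    (1 / 2) * ∑ x ∈ univ.filter (fun x => hhat x ≠ hstar x), P x
      ≤ ∑ x ∈ univ.filter (fun x => hhat x ≠ hstar x ∧ hstar x ≠ M x), P x :=
  majority_lemma1_general H P hPpos M hhat hbest hstar hstarH
end

section
/- Let H be a finite set of hypotheses on a finite nonempty example set X, let P be a probability distribution on X with P(x) > 0 for all x, let MAJ_H be a majority function for H, and let ĥ ∈ H be a best majority hypothesis. Then for every h* ∈ H with h* ≠ ĥ, the expected number of hypotheses eliminated by a counter-example drawn from P conditioned on D(ĥ, h*) is at least |H|/4; that is, Σ_{x ∈ D(ĥ,h*)} (P(x)/P(D(ĥ,h*)))·|{h ∈ H : h(x) ≠ h*(x)}| ≥ |H|/4. -/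
/-!
Write `D = D(ĥ, h*)`. If `h*(x) ≠ MAJ(x)`, then at least as many hypotheses vote `MAJ(x)` as vote
`h*(x)`, so a counter-example at `x` eliminates at least half of `H`. Since `ĥ` is a best majority
hypothesis, `P({h* = MAJ}) ≤ P({ĥ = MAJ})`; the two events agree outside `D` and are disjoint on
`D`, so `h* ≠ MAJ` on at least half of the mass of `D`. Averaging gives `|H|/2 · 1/2`.
-/

open Finset

theorem card_le_two_mul_card_filter_ne_of_ne_mode {ι β : Type*} [DecidableEq β] {s : Finset ι}
    {f : ι → β} {m v : β}
    (hm : ∀ u, (s.filter (fun i => f i = u)).card ≤ (s.filter (fun i => f i = m)).card)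
    (hv : v ≠ m) :
    s.card ≤ 2 * (s.filter (fun i => f i ≠ v)).card := by
  have hmode_ne : (s.filter (fun i => f i = m)).card ≤ (s.filter (fun i => f i ≠ v)).card :=
    card_le_card fun i hi => by
      simp only [mem_filter] at hi ⊢
      exact ⟨hi.1, hi.2 ▸ hv.symm⟩
  have hsplit : (s.filter (fun i => f i = v)).card + (s.filter (fun i => f i ≠ v)).card
      = s.card :=
    card_filter_add_card_filter_not _
  have := hm v
  omega

theorem sum_le_two_mul_sum_filter_ne {X β : Type*} [Fintype X] [DecidableEq β] {w : X → ℝ}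
    (hw : ∀ x, 0 ≤ w x) {f g M : X → β}
    (hfg : ∑ x ∈ univ.filter (fun x => f x = M x), w x
      ≤ ∑ x ∈ univ.filter (fun x => g x = M x), w x) :
    ∑ x ∈ univ.filter (fun x => g x ≠ f x), w x
      ≤ 2 * ∑ x ∈ (univ.filter (fun x => g x ≠ f x)).filter (fun x => f x ≠ M x), w x := by
  classical
  set A := univ.filter (fun x => f x = M x)
  set B := univ.filter (fun x => g x = M x)
  set D := univ.filter (fun x => g x ≠ f x)
  have hAB : D.filter (fun x => f x = M x) = A \ B := by
    ext x
    simp only [A, B, D, mem_filter, mem_sdiff, mem_univ, true_and]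
    constructor
    · rintro ⟨hgf, hf⟩
      exact ⟨hf, fun hg => hgf (hg.trans hf.symm)⟩
    · rintro ⟨hf, hg⟩
      exact ⟨fun hgf => hg (hgf.trans hf), hf⟩
  have hBA : B \ A ⊆ D.filter (fun x => f x ≠ M x) := fun x hx => by
    simp only [A, B, D, mem_filter, mem_sdiff, mem_univ, true_and] at hx ⊢
    exact ⟨fun hgf => hx.2 (hgf ▸ hx.1), hx.2⟩
  have hsdiff : ∑ x ∈ A \ B, w x ≤ ∑ x ∈ B \ A, w x := by
    linarith [sum_sdiff_sub_sum_sdiff (s₁ := A) (s₂ := B) (f := w)]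
  have hagree : ∑ x ∈ D.filter (fun x => f x = M x), w x
      ≤ ∑ x ∈ D.filter (fun x => f x ≠ M x), w x := by
    rw [hAB]
    exact hsdiff.trans (sum_le_sum_of_subset_of_nonneg hBA fun x _ _ => hw x)
  have hsplit : ∑ x ∈ D.filter (fun x => f x = M x), w x
      + ∑ x ∈ D.filter (fun x => f x ≠ M x), w x = ∑ x ∈ D, w x :=
    sum_filter_add_sum_filter_not _ _ _
  linarith

theorem mul_le_sum_mul_of_le_on_filter {ι : Type*} {s : Finset ι} (p : ι → Prop)
    [DecidablePred p] {w N : ι → ℝ} {c : ℝ} (hw : ∀ x ∈ s, 0 ≤ w x) (hN : ∀ x ∈ s, 0 ≤ N x)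
    (hc : ∀ x ∈ s, p x → c ≤ N x) :
    (∑ x ∈ s.filter p, w x) * c ≤ ∑ x ∈ s, w x * N x := by
  rw [sum_mul]
  calc ∑ x ∈ s.filter p, w x * c ≤ ∑ x ∈ s.filter p, w x * N x := by
        refine sum_le_sum fun x hx => ?_
        rw [mem_filter] at hx
        exact mul_le_mul_of_nonneg_left (hc x hx.1 hx.2) (hw x hx.1)
    _ ≤ ∑ x ∈ s, w x * N x :=
        sum_le_sum_of_subset_of_nonneg (filter_subset _ _) fun x hx _ =>
          mul_nonneg (hw x hx) (hN x hx)

theorem majority_expected_elimination_general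
    {X : Type*} [Fintype X]
    (H : Finset (X → ℕ))
    (P : X → ℝ)
    (hPpos : ∀ x, 0 < P x)
    (M : X → ℕ)
    (hM : ∀ (x : X) (v : ℕ),
      (H.filter (fun h => h x = v)).card ≤ (H.filter (fun h => h x = M x)).card)
    (hhat : X → ℕ)
    (hbest : ∀ h ∈ H,
      ∑ x ∈ univ.filter (fun x => h x = M x), P x
        ≤ ∑ x ∈ univ.filter (fun x => hhat x = M x), P x)
    (hstar : X → ℕ) (hstarH : hstar ∈ H) (hne : hstar ≠ hhat) :
    (H.card : ℝ) / 4 ≤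
      ∑ x ∈ univ.filter (fun x => hhat x ≠ hstar x),
        (P x / ∑ y ∈ univ.filter (fun y => hhat y ≠ hstar y), P y) *
          ((H.filter (fun h => h x ≠ hstar x)).card : ℝ) := by
  set D := univ.filter (fun x => hhat x ≠ hstar x)
  have hPD : 0 < ∑ y ∈ D, P y := by
    obtain ⟨x, hx⟩ := Function.ne_iff.mp hne
    exact sum_pos (fun x _ => hPpos x) ⟨x, by simpa [D] using Ne.symm hx⟩
  have hhalf_mass : 1 / 2 ≤ ∑ x ∈ D.filter (fun x => hstar x ≠ M x), P x / ∑ y ∈ D, P y := by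
    rw [← sum_div, le_div_iff₀ hPD]
    linarith [sum_le_two_mul_sum_filter_ne (fun x => (hPpos x).le) (hbest hstar hstarH)]
  have hhalf_elim : ∀ x ∈ D, hstar x ≠ M x →
      (H.card : ℝ) / 2 ≤ (H.filter (fun h => h x ≠ hstar x)).card := fun x _ hx => by
    have := card_le_two_mul_card_filter_ne_of_ne_mode (hM x) hx
    rw [div_le_iff₀ two_pos]
    exact_mod_cast this.trans_eq (mul_comm _ _)
  calc (H.card : ℝ) / 4 = 1 / 2 * ((H.card : ℝ) / 2) := by ring
    _ ≤ (∑ x ∈ D.filter (fun x => hstar x ≠ M x), P x / ∑ y ∈ D, P y) * ((H.card : ℝ) / 2) :=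
        mul_le_mul_of_nonneg_right hhalf_mass (by positivity)
    _ ≤ _ := mul_le_sum_mul_of_le_on_filter _ (fun x _ => div_nonneg (hPpos x).le hPD.le)
        (fun x _ => Nat.cast_nonneg _) hhalf_elim

/-- **Lemma 2 (Majority algorithm).** For a best majority hypothesis `hhat` and any target
`hstar ∈ H` with `hstar ≠ hhat`, a counter-example drawn from `P` conditioned on
`D(hhat, hstar)` eliminates at least `|H|/4` hypotheses in expectation. -/
theorem majority_expected_elimination
    {X : Type*} [Fintype X] [Nonempty X] [DecidableEq X]
    (H : Finset (X → ℕ))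
    (P : X → ℝ)
    (hPpos : ∀ x, 0 < P x)
    (hPsum : ∑ x, P x = 1)
    (M : X → ℕ)
    (hM : ∀ (x : X) (v : ℕ),
      (H.filter (fun h => h x = v)).card ≤ (H.filter (fun h => h x = M x)).card)
    (hhat : X → ℕ) (hhatH : hhat ∈ H)
    (hbest : ∀ h ∈ H,
      ∑ x ∈ univ.filter (fun x => h x = M x), P x
        ≤ ∑ x ∈ univ.filter (fun x => hhat x = M x), P x)
    (hstar : X → ℕ) (hstarH : hstar ∈ H) (hne : hstar ≠ hhat) :
    (H.card : ℝ) / 4 ≤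
      ∑ x ∈ univ.filter (fun x => hhat x ≠ hstar x),
        (P x / ∑ y ∈ univ.filter (fun y => hhat y ≠ hstar y), P y) *
          ((H.filter (fun h => h x ≠ hstar x)).card : ℝ) :=
  majority_expected_elimination_general H P hPpos M hM hhat hbest hstar hstarH hne
end

section
/- Let T : ℕ → ℝ satisfy T(1) = 0, and suppose that for every n ≥ 1 there exist nonnegative reals p₁, …, pₙ with Σ_{r=1}^{n} p_r = 1 and Σ_{r=1}^{n} r·p_r ≤ (3/4)·(n+1) such that T(n+1) ≤ 1 + Σ_{r=1}^{n} p_r·T(r). Then for every n ≥ 1, T(n) ≤ log(n)/log(4/3), i.e., T(n) ≤ log_{4/3}(n). -/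
/-!
Strong induction on `n`. By Jensen's inequality for the concave `logb (4/3)`, the average of
`logb (4/3) r` under `p` is at most `logb (4/3)` of the mean, which is at most
`logb (4/3) (n + 1) - 1` because the mean is at most `(n + 1) / (4/3)`; this `- 1` absorbs the
`1 +` of the recursion.
-/

open Finset

namespace Real

theorem sum_mul_logb_le_logb_sub_one {ι : Type*} {s : Finset ι} {w x : ι → ℝ} {b N : ℝ}
    (hb : 1 < b) (hw₀ : ∀ i ∈ s, 0 ≤ w i) (hw₁ : ∑ i ∈ s, w i = 1) (hx : ∀ i ∈ s, 0 < x i)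
    (hmean : ∑ i ∈ s, w i * x i ≤ N / b) :
    ∑ i ∈ s, w i * logb b (x i) ≤ logb b N - 1 := by
  have hmean_pos : 0 < ∑ i ∈ s, w i * x i := by
    simpa using (convex_Ioi (0 : ℝ)).sum_mem hw₀ hw₁ hx
  have hN : 0 < N := (div_pos_iff_of_pos_right (by linarith)).mp (hmean_pos.trans_le hmean)
  have jensen : ∑ i ∈ s, w i * log (x i) ≤ log (∑ i ∈ s, w i * x i) := by
    simpa using strictConcaveOn_log_Ioi.concaveOn.le_map_sum hw₀ hw₁ hx
  calc ∑ i ∈ s, w i * logb b (x i) = (∑ i ∈ s, w i * log (x i)) / log b := by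
        simp only [← log_div_log, mul_div_assoc', sum_div]
    _ ≤ log (∑ i ∈ s, w i * x i) / log b := by gcongr; exact (log_pos hb).le
    _ ≤ logb b (N / b) := logb_le_logb_of_le hb hmean_pos hmean
    _ = logb b N - 1 := by rw [logb_div hN.ne' (by linarith), logb_self_eq_one hb]

end Real

/-- The recursion underlying the learning-time bound of the Majority algorithm:
if `T 1 = 0` and for every `n ≥ 1` there is a probability vector `p` on `{1,…,n}` whose mean
is at most `(3/4)·(n+1)` with `T (n+1) ≤ 1 + ∑ r, p r · T r`, then
`T n ≤ log n / log (4/3)` for all `n ≥ 1`. -/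
theorem majority_recursion_bound
    (T : ℕ → ℝ)
    (hT1 : T 1 = 0)
    (hrec : ∀ n : ℕ, 1 ≤ n → ∃ p : ℕ → ℝ,
      (∀ r ∈ Finset.Icc 1 n, 0 ≤ p r) ∧
      (∑ r ∈ Finset.Icc 1 n, p r = 1) ∧
      (∑ r ∈ Finset.Icc 1 n, (r : ℝ) * p r ≤ (3 / 4) * (n + 1)) ∧
      T (n + 1) ≤ 1 + ∑ r ∈ Finset.Icc 1 n, p r * T r) :
    ∀ n : ℕ, 1 ≤ n → T n ≤ Real.log n / Real.log (4 / 3) := by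
  intro n hn
  rw [Real.log_div_log]
  induction n using Nat.strong_induction_on with
  | _ n ih =>
  obtain _ | m := n
  · omega
  obtain rfl | hm := m.eq_zero_or_pos
  · simp [hT1]
  obtain ⟨p, hp₀, hp₁, hmean, hstep⟩ := hrec m hm
  have hT_le : ∑ r ∈ Icc 1 m, p r * T r ≤ ∑ r ∈ Icc 1 m, p r * Real.logb (4 / 3) r :=
    sum_le_sum fun r hr ↦ by
      obtain ⟨hr₁, hrm⟩ := mem_Icc.mp hr
      exact mul_le_mul_of_nonneg_left (ih r (by omega) hr₁) (hp₀ r hr)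
  have hlogb_le : ∑ r ∈ Icc 1 m, p r * Real.logb (4 / 3) r ≤ Real.logb (4 / 3) ↑(m + 1) - 1 := by
    refine Real.sum_mul_logb_le_logb_sub_one (by norm_num) hp₀ hp₁
      (fun r hr ↦ by have := (mem_Icc.mp hr).1; positivity) ?_
    simp_rw [mul_comm (p _)]
    push_cast
    linarith
  linarith
end

section
/- Let H be a finite nonempty set of hypotheses on a finite nonempty example set X and let P be a probability distribution on X with P(x) > 0 for all x. For distinct hypotheses h₁, h₂ ∈ H define E(h₁,h₂) = Σ_{x ∈ D(h₁,h₂)} (|{h' ∈ H : h'(x) ≠ h₂(x)}|/|H|)·(P(x)/P(D(h₁,h₂))). Then for all h₁, h₂ ∈ H with h₁ ≠ h₂, E(h₁,h₂) + E(h₂,h₁) ≥ 1. -/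
/-!
Fix `x` with `h₁ x ≠ h₂ x`. No hypothesis can agree with both `h₁` and `h₂` at `x`, so every
`h' ∈ H` is eliminated by `x` in at least one of the two directions, and the two eliminated
fractions at `x` add up to at least `1`. Both `E(h₁,h₂)` and `E(h₂,h₁)` average these fractions
over the same set `D(h₁,h₂)` with the same conditional weights, so their sum is an average of
numbers `≥ 1`.
-/

open Finset

theorem Finset.card_le_card_filter_ne_add_card_filter_ne {ι β : Type*} (s : Finset ι)
    (f : ι → β) [DecidableEq β] {a b : β} (hab : a ≠ b) :
    #s ≤ #{i ∈ s | f i ≠ a} + #{i ∈ s | f i ≠ b} := by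
  calc #s = #{i ∈ s | f i = a} + #{i ∈ s | f i ≠ a} :=
        (card_filter_add_card_filter_not _).symm
    _ ≤ #{i ∈ s | f i ≠ b} + #{i ∈ s | f i ≠ a} := by
        gcongr with i _
        exact fun hia => hia ▸ hab
    _ = _ := add_comm _ _

theorem Finset.one_le_card_filter_ne_div_add {ι β : Type*} {s : Finset ι} (hs : s.Nonempty)
    (f : ι → β) [DecidableEq β] {a b : β} (hab : a ≠ b) :
    1 ≤ (#{i ∈ s | f i ≠ a} : ℝ) / #s + (#{i ∈ s | f i ≠ b} : ℝ) / #s := by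
  rw [← add_div, le_div_iff₀ (by exact_mod_cast hs.card_pos), one_mul]
  exact_mod_cast s.card_le_card_filter_ne_add_card_filter_ne f hab

theorem Finset.le_sum_mul_div_sum {α : Type*} {D : Finset α} {w g : α → ℝ} {c : ℝ}
    (hw : ∀ x ∈ D, 0 ≤ w x) (hW : 0 < ∑ x ∈ D, w x) (hg : ∀ x ∈ D, c ≤ g x) :
    c ≤ ∑ x ∈ D, g x * (w x / ∑ y ∈ D, w y) :=
  calc c = ∑ x ∈ D, c * (w x / ∑ y ∈ D, w y) := by
        rw [← mul_sum, ← sum_div, div_self hW.ne', mul_one]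
    _ ≤ _ := sum_le_sum fun x hx =>
        mul_le_mul_of_nonneg_right (hg x hx) (div_nonneg (hw x hx) hW.le)

theorem expected_elimination_sum_ge_one_general
    {X : Type*} [Fintype X]
    (H : Finset (X → ℕ)) (hH : H.Nonempty)
    (P : X → ℝ)
    (hPpos : ∀ x, 0 < P x)
    (h₁ h₂ : X → ℕ) (hne : h₁ ≠ h₂) :
    1 ≤ (∑ x ∈ univ.filter (fun x => h₁ x ≠ h₂ x),
          (((H.filter (fun h' => h' x ≠ h₂ x)).card : ℝ) / (H.card : ℝ)) *
            (P x / ∑ y ∈ univ.filter (fun y => h₁ y ≠ h₂ y), P y))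
        + (∑ x ∈ univ.filter (fun x => h₂ x ≠ h₁ x),
          (((H.filter (fun h' => h' x ≠ h₁ x)).card : ℝ) / (H.card : ℝ)) *
            (P x / ∑ y ∈ univ.filter (fun y => h₂ y ≠ h₁ y), P y)) := by
  simp only [ne_comm (a := h₂ _), ← sum_add_distrib, ← add_mul]
  obtain ⟨x₀, hx₀⟩ := Function.ne_iff.mp hne
  have hPD : 0 < ∑ y ∈ univ.filter (fun y => h₁ y ≠ h₂ y), P y :=
    sum_pos (fun x _ => hPpos x) ⟨x₀, mem_filter.mpr ⟨mem_univ _, hx₀⟩⟩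
  exact le_sum_mul_div_sum (fun x _ => (hPpos x).le) hPD fun x hx =>
    Finset.one_le_card_filter_ne_div_add hH (· x) (mem_filter.mp hx).2.symm

/-- **Lemma 4 (Randomized algorithm).** For distinct `h₁, h₂ ∈ H`, the expected eliminated
fractions satisfy `E(h₁,h₂) + E(h₂,h₁) ≥ 1`, where
`E(h₁,h₂) = ∑_{x ∈ D(h₁,h₂)} (|{h' ∈ H : h' x ≠ h₂ x}|/|H|) · (P x / P (D(h₁,h₂)))`. -/
theorem expected_elimination_sum_ge_one
    {X : Type*} [Fintype X] [Nonempty X] [DecidableEq X]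
    (H : Finset (X → ℕ)) (hH : H.Nonempty)
    (P : X → ℝ)
    (hPpos : ∀ x, 0 < P x)
    (hPsum : ∑ x, P x = 1)
    (h₁ h₂ : X → ℕ) (h₁H : h₁ ∈ H) (h₂H : h₂ ∈ H) (hne : h₁ ≠ h₂) :
    1 ≤ (∑ x ∈ univ.filter (fun x => h₁ x ≠ h₂ x),
          (((H.filter (fun h' => h' x ≠ h₂ x)).card : ℝ) / (H.card : ℝ)) *
            (P x / ∑ y ∈ univ.filter (fun y => h₁ y ≠ h₂ y), P y))
        + (∑ x ∈ univ.filter (fun x => h₂ x ≠ h₁ x),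
          (((H.filter (fun h' => h' x ≠ h₁ x)).card : ℝ) / (H.card : ℝ)) *
            (P x / ∑ y ∈ univ.filter (fun y => h₂ y ≠ h₁ y), P y)) :=
  expected_elimination_sum_ge_one_general H hH P hPpos h₁ h₂ hne
end

section
/- Let ι be a finite nonempty index set, let e : ι → ι → ℝ satisfy e(i,i) = 1 for all i and e(i,j) + e(j,i) ≥ 1 for all i ≠ j, and let q : ι → ℝ be nonnegative with Σ_i q(i) = 1. Then Σ_i Σ_j q(i)·q(j)·e(i,j) ≥ 1/2. -/
open Finset

section QuadraticForm

variable {ι R : Type*} [Fintype ι]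

theorem two_mul_sum_sum_mul_mul_eq_sum_sum_mul_mul_add_swap [CommSemiring R]
    (q : ι → R) (e : ι → ι → R) :
    2 * ∑ i, ∑ j, q i * q j * e i j = ∑ i, ∑ j, q i * q j * (e i j + e j i) := by
  have hswap : ∑ i, ∑ j, q i * q j * e i j = ∑ i, ∑ j, q i * q j * e j i := by
    rw [sum_comm]
    simp only [mul_comm (q _) (q _)]
  conv_lhs => rw [two_mul]; arg 2; rw [hswap]
  simp only [mul_add, sum_add_distrib]

theorem mul_sq_sum_le_sum_sum_mul_mul [CommSemiring R] [PartialOrder R] [IsOrderedRing R]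
    {q : ι → R} {f : ι → ι → R} {c : R} (hq : ∀ i, 0 ≤ q i) (hf : ∀ i j, c ≤ f i j) :
    c * (∑ i, q i) ^ 2 ≤ ∑ i, ∑ j, q i * q j * f i j := by
  rw [sq, sum_mul_sum, mul_sum]
  refine sum_le_sum fun i _ => ?_
  rw [mul_sum]
  refine sum_le_sum fun j _ => ?_
  rw [mul_comm]
  exact mul_le_mul_of_nonneg_left (hf i j) (mul_nonneg (hq i) (hq j))

end QuadraticForm

theorem quadratic_form_half_general
    {ι : Type*} [Fintype ι]
    (e : ι → ι → ℝ)
    (hdiag : ∀ i, e i i = 1)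
    (hsym : ∀ i j, i ≠ j → 1 ≤ e i j + e j i)
    (q : ι → ℝ)
    (hqnonneg : ∀ i, 0 ≤ q i)
    (hqsum : ∑ i, q i = 1) :
    (1 : ℝ) / 2 ≤ ∑ i, ∑ j, q i * q j * e i j := by
  have hpair : ∀ i j, 1 ≤ e i j + e j i := by
    intro i j
    rcases eq_or_ne i j with rfl | hij
    · rw [hdiag]; norm_num
    · exact hsym i j hij
  have hbound := mul_sq_sum_le_sum_sum_mul_mul hqnonneg hpair
  rw [← two_mul_sum_sum_mul_mul_eq_sum_sum_mul_mul_add_swap, hqsum] at hbound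
  linarith

/-- Quadratic-form inequality: if `e i i = 1`, `e i j + e j i ≥ 1` for `i ≠ j`, and `q` is a
probability vector, then `∑ i ∑ j, q i · q j · e i j ≥ 1/2`. -/
theorem quadratic_form_half
    {ι : Type*} [Fintype ι] [Nonempty ι]
    (e : ι → ι → ℝ)
    (hdiag : ∀ i, e i i = 1)
    (hsym : ∀ i j, i ≠ j → 1 ≤ e i j + e j i)
    (q : ι → ℝ)
    (hqnonneg : ∀ i, 0 ≤ q i)
    (hqsum : ∑ i, q i = 1) :
    (1 : ℝ) / 2 ≤ ∑ i, ∑ j, q i * q j * e i j :=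
  quadratic_form_half_general e hdiag hsym q hqnonneg hqsum
end

section
/- Let T : ℕ → ℝ satisfy T(1) = 0, and suppose that for every n ≥ 1 there exist nonnegative reals p₁, …, pₙ with Σ_{r=1}^{n} p_r = 1 and Σ_{r=1}^{n} r·p_r ≤ (n+1)/2 such that T(n+1) ≤ 1 + Σ_{r=1}^{n} p_r·T(r). Then for every n ≥ 1, T(n) ≤ log₂(n). -/
/-!
Strong induction on `n`. Since `log₂` is concave, Jensen's inequality bounds the average
`∑ p r · log₂ r` by `log₂` of the mean of `p`, which is at most `log₂ ((n+1)/2) = log₂ (n+1) - 1`;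
the `1` spent on the current counter-example makes up the difference.
-/

open Finset

theorem sum_mul_logb_le_logb_sum_mul {ι : Type*} (s : Finset ι) (w x : ι → ℝ) {b : ℝ}
    (hb : 1 < b) (hw₀ : ∀ i ∈ s, 0 ≤ w i) (hw₁ : ∑ i ∈ s, w i = 1)
    (hx : ∀ i ∈ s, 0 < x i) :
    ∑ i ∈ s, w i * Real.logb b (x i) ≤ Real.logb b (∑ i ∈ s, w i * x i) := by
  have jensen : ∑ i ∈ s, w i * Real.log (x i) ≤ Real.log (∑ i ∈ s, w i * x i) := by
    simpa only [smul_eq_mul] using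
      strictConcaveOn_log_Ioi.concaveOn.le_map_sum hw₀ hw₁ hx
  simp only [Real.logb, ← mul_div_assoc, ← sum_div]
  exact div_le_div_of_nonneg_right jensen (Real.log_pos hb).le

theorem one_add_sum_mul_logb_two_le {n : ℕ} (p : ℕ → ℝ) (hp₀ : ∀ r ∈ Icc 1 n, 0 ≤ p r)
    (hp₁ : ∑ r ∈ Icc 1 n, p r = 1)
    (hmean : ∑ r ∈ Icc 1 n, (r : ℝ) * p r ≤ ((n : ℝ) + 1) / 2) :
    1 + ∑ r ∈ Icc 1 n, p r * Real.logb 2 r ≤ Real.logb 2 (n + 1) := by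
  have hpos : ∀ r ∈ Icc 1 n, (0 : ℝ) < r := fun r hr => by
    have := (mem_Icc.mp hr).1
    positivity
  have hmean_ge_one : 1 ≤ ∑ r ∈ Icc 1 n, p r * (r : ℝ) := by
    calc (1 : ℝ) = ∑ r ∈ Icc 1 n, p r * 1 := by simp [hp₁]
      _ ≤ ∑ r ∈ Icc 1 n, p r * (r : ℝ) := by
        gcongr with r hr
        · exact hp₀ r hr
        · exact_mod_cast (mem_Icc.mp hr).1
  have hmean' : ∑ r ∈ Icc 1 n, p r * (r : ℝ) ≤ ((n : ℝ) + 1) / 2 := by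
    simpa only [mul_comm] using hmean
  calc 1 + ∑ r ∈ Icc 1 n, p r * Real.logb 2 r
      ≤ 1 + Real.logb 2 (∑ r ∈ Icc 1 n, p r * (r : ℝ)) := by
        gcongr
        exact sum_mul_logb_le_logb_sum_mul _ _ _ one_lt_two hp₀ hp₁ hpos
    _ ≤ 1 + Real.logb 2 (((n : ℝ) + 1) / 2) := by
        gcongr 1 + ?_
        exact Real.logb_le_logb_of_le one_lt_two (by linarith) hmean'
    _ = Real.logb 2 (n + 1) := by
        rw [Real.logb_div (by positivity) two_ne_zero, Real.logb_self_eq_one one_lt_two]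
        ring

/-- The recursion underlying the learning-time bound of the Randomized algorithm:
if `T 1 = 0` and for every `n ≥ 1` there is a probability vector `p` on `{1,…,n}` whose mean
is at most `(n+1)/2` with `T (n+1) ≤ 1 + ∑ r, p r · T r`, then `T n ≤ log₂ n` for `n ≥ 1`. -/
theorem randomized_recursion_bound
    (T : ℕ → ℝ)
    (hT1 : T 1 = 0)
    (hrec : ∀ n : ℕ, 1 ≤ n → ∃ p : ℕ → ℝ,
      (∀ r ∈ Finset.Icc 1 n, 0 ≤ p r) ∧
      (∑ r ∈ Finset.Icc 1 n, p r = 1) ∧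
      (∑ r ∈ Finset.Icc 1 n, (r : ℝ) * p r ≤ ((n : ℝ) + 1) / 2) ∧
      T (n + 1) ≤ 1 + ∑ r ∈ Finset.Icc 1 n, p r * T r) :
    ∀ n : ℕ, 1 ≤ n → T n ≤ Real.logb 2 n := by
  intro n hn
  induction n using Nat.strong_induction_on with
  | _ n ih =>
    rcases n with _ | _ | m
    · omega
    · simp [hT1]
    obtain ⟨p, hp₀, hp₁, hmean, hTm⟩ := hrec (m + 1) m.succ_pos
    have hT_le : ∀ r ∈ Icc 1 (m + 1), T r ≤ Real.logb 2 r := fun r hr =>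
      ih r (Nat.lt_succ_of_le (mem_Icc.mp hr).2) (mem_Icc.mp hr).1
    calc T (m + 1 + 1) ≤ 1 + ∑ r ∈ Icc 1 (m + 1), p r * T r := hTm
      _ ≤ 1 + ∑ r ∈ Icc 1 (m + 1), p r * Real.logb 2 r := by
        gcongr with r hr
        · exact hp₀ r hr
        · exact hT_le r hr
      _ ≤ Real.logb 2 ↑(m + 1 + 1) := by
        exact_mod_cast one_add_sum_mul_logb_two_le p hp₀ hp₁ hmean
end

section
/- Let X be a finite nonempty example set with probability distribution P (P(x) > 0 for all x), let ε, δ ∈ (0,1) and N ≥ 1 be reals, and let h and h* be hypotheses with P(D(h,h*)) ≥ ε (h is ε-bad). Let w : X → ℝ be a nonnegative weight function with Σ_{x ∈ D(h,h*)} w(x) ≤ ln(N/δ). Define the threshold θ*(x) = ln(N/δ)·2·P(x)/ε and call x light if w(x) ≤ θ*(x). Then the conditional probability of the light columns given D(h,h*) is at least one half: Σ_{x ∈ D(h,h*), w(x) ≤ θ*(x)} P(x)/P(D(h,h*)) ≥ 1/2. Consequently, the counter-example drawn from P conditioned on D(h,h*) lands on a light column, and hence increases the total weight of light columns, by at least 1/2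 in expectation. -/
/-! By Markov's inequality, the columns of `D(h,h*)` whose weight exceeds `2L/ε` times their
mass carry mass at most `ε / 2 ≤ P(D(h,h*)) / 2`, since their total weight is at most `L = ln(N/δ)`. -/

open Finset

theorem Finset.mul_sum_filter_not_le_mul_le_sum {ι R : Type*} [Semiring R] [LinearOrder R]
    [IsOrderedRing R] (s : Finset ι) (p w : ι → R) (c : R) (hw : ∀ x ∈ s, 0 ≤ w x) :
    c * ∑ x ∈ s with ¬ w x ≤ c * p x, p x ≤ ∑ x ∈ s, w x := by
  rw [mul_sum]
  calc ∑ x ∈ s with ¬ w x ≤ c * p x, c * p x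
      ≤ ∑ x ∈ s with ¬ w x ≤ c * p x, w x :=
        sum_le_sum fun x hx => (not_le.mp (mem_filter.mp hx).2).le
    _ ≤ ∑ x ∈ s, w x :=
        sum_le_sum_of_subset_of_nonneg (filter_subset _ _) fun x hx _ => hw x hx

theorem Finset.half_sum_le_sum_filter_le_mul {ι : Type*} (s : Finset ι) (p w : ι → ℝ)
    {ε L : ℝ} (hε : 0 < ε) (hL : 0 < L) (hεp : ε ≤ ∑ x ∈ s, p x)
    (hw : ∀ x ∈ s, 0 ≤ w x) (hwL : ∑ x ∈ s, w x ≤ L) :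
    (∑ x ∈ s, p x) / 2 ≤ ∑ x ∈ s with w x ≤ 2 * L / ε * p x, p x := by
  have heavy : ∑ x ∈ s with ¬ w x ≤ 2 * L / ε * p x, p x ≤ ε / 2 := by
    have markov := s.mul_sum_filter_not_le_mul_le_sum p w (2 * L / ε) hw
    rw [div_mul_eq_mul_div, div_le_iff₀ hε] at markov
    nlinarith
  linarith [sum_filter_add_sum_filter_not s (fun x => w x ≤ 2 * L / ε * p x) p]

theorem light_columns_half_mass_general
    {X : Type*} [Fintype X]
    (P : X → ℝ)
    (ε δ N : ℝ) (hε0 : 0 < ε) (hδ0 : 0 < δ) (hδ1 : δ < 1) (hN : 1 ≤ N)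
    (h hstar : X → ℕ)
    (hbad : ε ≤ ∑ x ∈ univ.filter (fun x => h x ≠ hstar x), P x)
    (w : X → ℝ) (hwnonneg : ∀ x, 0 ≤ w x)
    (hwsum : ∑ x ∈ univ.filter (fun x => h x ≠ hstar x), w x ≤ Real.log (N / δ)) :
    (1 : ℝ) / 2 ≤
      ∑ x ∈ univ.filter
          (fun x => h x ≠ hstar x ∧ w x ≤ Real.log (N / δ) * 2 * P x / ε),
        P x / ∑ y ∈ univ.filter (fun y => h y ≠ hstar y), P y := by
  have hlog : 0 < Real.log (N / δ) := Real.log_pos <| by rw [lt_div_iff₀ hδ0]; linarith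
  have hmass : 0 < ∑ y ∈ univ.filter (fun y => h y ≠ hstar y), P y := hε0.trans_le hbad
  rw [← sum_div, le_div_iff₀ hmass, ← filter_filter]
  have light := (univ.filter fun x => h x ≠ hstar x).half_sum_le_sum_filter_le_mul P w hε0 hlog
    hbad (fun x _ => hwnonneg x) hwsum
  have threshold : ∀ x, Real.log (N / δ) * 2 * P x / ε = 2 * Real.log (N / δ) / ε * P x :=
    fun x => by ring
  simp only [threshold]
  linarith

/-- **Lemma (light columns get at least half the counter-example mass).** If `h` is
`ε`-bad and the total weight of `w` on `D(h,h*)` is at most `ln (N/δ)`, then the columns of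
`D(h,h*)` that are light (i.e. `w x ≤ θ*(x) = ln(N/δ)·2·P(x)/ε`) carry at least half of
the conditional probability mass of `D(h,h*)`. -/
theorem light_columns_half_mass
    {X : Type*} [Fintype X] [Nonempty X] [DecidableEq X]
    (P : X → ℝ)
    (hPpos : ∀ x, 0 < P x)
    (hPsum : ∑ x, P x = 1)
    (ε δ N : ℝ) (hε0 : 0 < ε) (hε1 : ε < 1) (hδ0 : 0 < δ) (hδ1 : δ < 1) (hN : 1 ≤ N)
    (h hstar : X → ℕ)
    (hbad : ε ≤ ∑ x ∈ univ.filter (fun x => h x ≠ hstar x), P x)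
    (w : X → ℝ) (hwnonneg : ∀ x, 0 ≤ w x)
    (hwsum : ∑ x ∈ univ.filter (fun x => h x ≠ hstar x), w x ≤ Real.log (N / δ)) :
    (1 : ℝ) / 2 ≤
      ∑ x ∈ univ.filter
          (fun x => h x ≠ hstar x ∧ w x ≤ Real.log (N / δ) * 2 * P x / ε),
        P x / ∑ y ∈ univ.filter (fun y => h y ≠ hstar y), P y :=
  light_columns_half_mass_general P ε δ N hε0 hδ0 hδ1 hN h hstar hbad w hwnonneg hwsum
end

section
/- Let X be a finite nonempty example set with probability distribution P (P(x) > 0 for all x), let ε, δ ∈ (0,1) and N ≥ 1 be reals, let h* be a target hypothesis, and let h₁, …, h_i be hypotheses. Define cumulative weights by W₁(x) = 0 and W_{j+1}(x) = W_j(x) + P(x)/P(D(h_j,h*)) if x ∈ D(h_j,h*), W_{j+1}(x) = W_j(x) otherwise; and define the threshold θ*(x) = ln(N/δ)·2·P(x)/ε. Suppose that for every j with 1 ≤ j ≤ i: P(D(h_j,h*)) ≥ ε (each h_j is ε-bad) and Σ_{x ∈ D(h_j,h*)} W_j(x) ≤ ln(N/δ). If there exists a column x ∈ X with W_{i+1}(x)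 ≤ θ*(x) (a column still light after round i), then i ≤ (4·ln(N/δ) + 2)/ε. -/
/-!
The capped potential `Φⱼ = ∑ₓ min (Wⱼ x) ((2L + 1) P x / ε)`, with `L = ln (N/δ)`, starts
at `0` and never exceeds `(2L + 1)/ε`. Each round raises it by at least `1/2`: by Markov's
inequality the columns of `Dⱼ` that are light for the threshold `2L P x / ε` carry at least
half of `P(Dⱼ)`, and such a column receives its whole increment `P x / P(Dⱼ) ≤ P x / ε`
without reaching its cap.
-/

open Finset

section CappedPotential

variable {X : Type*} {P W : X → ℝ} {D : Finset X} {ε L : ℝ}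

lemma mul_sum_filter_lt_le_sum (hW : ∀ x ∈ D, 0 ≤ W x) (t : ℝ) :
    t * ∑ x ∈ D.filter (fun x => t * P x < W x), P x ≤ ∑ x ∈ D, W x := by
  rw [mul_sum]
  calc ∑ x ∈ D.filter (fun x => t * P x < W x), t * P x
      ≤ ∑ x ∈ D.filter (fun x => t * P x < W x), W x :=
        sum_le_sum fun x hx => (mem_filter.1 hx).2.le
    _ ≤ ∑ x ∈ D, W x :=
        sum_le_sum_of_subset_of_nonneg (filter_subset _ _) fun x hx _ => hW x hx

lemma half_sum_le_sum_filter_le (hε : 0 < ε) (hL : 0 < L) (hW : ∀ x ∈ D, 0 ≤ W x)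
    (hWD : ∑ x ∈ D, W x ≤ L) (hD : ε ≤ ∑ x ∈ D, P x) :
    (∑ x ∈ D, P x) / 2 ≤ ∑ x ∈ D.filter (fun x => W x ≤ 2 * L / ε * P x), P x := by
  have hsplit := sum_filter_add_sum_filter_not D (fun x => W x ≤ 2 * L / ε * P x) P
  simp only [not_le] at hsplit
  have hmarkov : 2 * L / ε * ∑ x ∈ D.filter (fun x => 2 * L / ε * P x < W x), P x ≤ L :=
    (mul_sum_filter_lt_le_sum hW _).trans hWD
  have hheavy : ∑ x ∈ D.filter (fun x => 2 * L / ε * P x < W x), P x ≤ ε / 2 := by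
    rw [div_mul_eq_mul_div, div_le_iff₀ hε] at hmarkov
    exact le_of_mul_le_mul_left (by linarith) hL
  linarith

lemma min_add_le_min_add_of_add_le {a c d : ℝ} (h : a + d ≤ c) :
    min a c + d ≤ min (a + d) c := by
  rw [min_eq_left h]
  linarith [min_le_left a c]

variable [Fintype X] [DecidableEq X]

lemma sum_min_add_half_le (hP : ∀ x, 0 ≤ P x) (hε : 0 < ε) (hL : 0 < L)
    (hW : ∀ x, 0 ≤ W x) (hWD : ∑ x ∈ D, W x ≤ L) (hD : ε ≤ ∑ x ∈ D, P x) :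
    ∑ x, min (W x) ((2 * L + 1) / ε * P x) + 1 / 2 ≤
      ∑ x, min (W x + if x ∈ D then P x / ∑ y ∈ D, P y else 0)
        ((2 * L + 1) / ε * P x) := by
  set PD := ∑ y ∈ D, P y
  set light := D.filter (fun x => W x ≤ 2 * L / ε * P x)
  have hPD : 0 < PD := hε.trans_le hD
  have hhalf : 1 / 2 ≤ ∑ x, if x ∈ light then P x / PD else 0 := by
    rw [sum_ite_mem, univ_inter, ← sum_div, le_div_iff₀ hPD]
    linarith [half_sum_le_sum_filter_le hε hL (fun x _ => hW x) hWD hD]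
  have hcolumn : ∀ x,
      min (W x) ((2 * L + 1) / ε * P x) + (if x ∈ light then P x / PD else 0) ≤
        min (W x + if x ∈ D then P x / PD else 0) ((2 * L + 1) / ε * P x) := by
    intro x
    by_cases hx : x ∈ light
    · obtain ⟨hxD, hxlight⟩ := mem_filter.1 hx
      rw [if_pos hx, if_pos hxD]
      apply min_add_le_min_add_of_add_le
      have hinc : P x / PD ≤ P x / ε := div_le_div_of_nonneg_left (hP x) hε hD
      calc W x + P x / PD ≤ 2 * L / ε * P x + P x / ε := add_le_add hxlight hinc
        _ = (2 * L + 1) / ε * P x := by ring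
    · rw [if_neg hx, add_zero]
      have hinc : 0 ≤ if x ∈ D then P x / PD else 0 :=
        ite_nonneg (div_nonneg (hP x) hPD.le) le_rfl
      exact min_le_min_right _ (le_add_of_nonneg_right hinc)
  calc ∑ x, min (W x) ((2 * L + 1) / ε * P x) + 1 / 2
      ≤ ∑ x, (min (W x) ((2 * L + 1) / ε * P x) + if x ∈ light then P x / PD else 0) := by
        rw [sum_add_distrib]
        linarith
    _ ≤ _ := sum_le_sum fun x _ => hcolumn x

end CappedPotential

section Rounds

variable {X : Type*} [DecidableEq X] {P : X → ℝ} {W : ℕ → X → ℝ}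
  {D : ℕ → Finset X} {ε L : ℝ}

lemma weights_nonneg (hP : ∀ x, 0 ≤ P x) (hW1 : ∀ x, W 1 x = 0)
    (hstep : ∀ j, 1 ≤ j → ∀ x,
      W (j + 1) x = W j x + if x ∈ D j then P x / ∑ y ∈ D j, P y else 0)
    (k : ℕ) (x : X) : 0 ≤ W (k + 1) x := by
  induction k generalizing x with
  | zero => simp [hW1]
  | succ k ih =>
    rw [hstep _ (by omega)]
    exact add_nonneg (ih x) (ite_nonneg (div_nonneg (hP x) (sum_nonneg fun y _ => hP y)) le_rfl)

variable [Fintype X]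

lemma rounds_div_two_le_sum_min (hP : ∀ x, 0 ≤ P x) (hε : 0 < ε) (hL : 0 < L)
    (hW1 : ∀ x, W 1 x = 0)
    (hstep : ∀ j, 1 ≤ j → ∀ x,
      W (j + 1) x = W j x + if x ∈ D j then P x / ∑ y ∈ D j, P y else 0)
    {i : ℕ} (hbad : ∀ j ∈ Icc 1 i, ε ≤ ∑ x ∈ D j, P x)
    (hweight : ∀ j ∈ Icc 1 i, ∑ x ∈ D j, W j x ≤ L) :
    (i : ℝ) / 2 ≤ ∑ x, min (W (i + 1) x) ((2 * L + 1) / ε * P x) := by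
  induction i with
  | zero =>
    simp only [hW1, CharP.cast_eq_zero, zero_div]
    exact sum_nonneg fun x _ => le_min le_rfl (by have := hP x; positivity)
  | succ k ih =>
    have hk : k + 1 ∈ Icc 1 (k + 1) := mem_Icc.2 ⟨by omega, le_rfl⟩
    have hIcc : Icc 1 k ⊆ Icc 1 (k + 1) := Icc_subset_Icc_right (by omega)
    have := sum_min_add_half_le hP hε hL (weights_nonneg hP hW1 hstep k)
      (hweight _ hk) (hbad _ hk)
    simp only [hstep (k + 1) (by omega)]
    push_cast
    linarith [ih (fun j hj => hbad j (hIcc hj)) (fun j hj => hweight j (hIcc hj))]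

end Rounds

theorem light_column_round_bound_general
    {X : Type*} [Fintype X]
    (P : X → ℝ)
    (hPpos : ∀ x, 0 < P x)
    (hPsum : ∑ x, P x = 1)
    (ε δ N : ℝ) (hε0 : 0 < ε) (hδ0 : 0 < δ) (hδ1 : δ < 1) (hN : 1 ≤ N)
    (hstar : X → ℕ)
    (i : ℕ)
    (hseq : ℕ → (X → ℕ))
    (W : ℕ → X → ℝ)
    (hW1 : ∀ x, W 1 x = 0)
    (hWrec : ∀ j : ℕ, 1 ≤ j → ∀ x : X,
      W (j + 1) x = W j x +
        (if hseq j x ≠ hstar x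
         then P x / ∑ y ∈ univ.filter (fun y => hseq j y ≠ hstar y), P y
         else 0))
    (hbad : ∀ j ∈ Finset.Icc 1 i,
      ε ≤ ∑ x ∈ univ.filter (fun x => hseq j x ≠ hstar x), P x)
    (hweight : ∀ j ∈ Finset.Icc 1 i,
      ∑ x ∈ univ.filter (fun x => hseq j x ≠ hstar x), W j x ≤ Real.log (N / δ)) :
    (i : ℝ) ≤ (4 * Real.log (N / δ) + 2) / ε := by
  classical
  set L := Real.log (N / δ)
  have hL : 0 < L := Real.log_pos (by rw [lt_div_iff₀ hδ0]; linarith)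
  have hP x : 0 ≤ P x := (hPpos x).le
  set D : ℕ → Finset X := fun j => univ.filter (fun x => hseq j x ≠ hstar x)
  have hstep j (hj : 1 ≤ j) x :
      W (j + 1) x = W j x + if x ∈ D j then P x / ∑ y ∈ D j, P y else 0 := by
    simp only [D, hWrec j hj x, mem_filter, mem_univ, true_and]
  have hgrow := rounds_div_two_le_sum_min hP hε0 hL hW1 hstep hbad hweight
  have hcap : ∑ x, min (W (i + 1) x) ((2 * L + 1) / ε * P x) ≤ (2 * L + 1) / ε := by
    calc _ ≤ ∑ x, (2 * L + 1) / ε * P x := sum_le_sum fun x _ => min_le_right _ _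
      _ = (2 * L + 1) / ε := by rw [← mul_sum, hPsum, mul_one]
  calc (i : ℝ) = 2 * (i / 2) := by ring
    _ ≤ 2 * ((2 * L + 1) / ε) := by linarith
    _ = (4 * L + 2) / ε := by ring

/-- **Lemma (all columns become heavy quickly).** If every round `j ∈ {1,…,i}` uses an
`ε`-bad hypothesis `hⱼ` whose total weight is at most `ln (N/δ)`, and some column is still
light after round `i` (i.e. `W (i+1) x ≤ θ*(x) = ln(N/δ)·2·P(x)/ε`), then
`i ≤ (4·ln(N/δ) + 2)/ε`. -/
theorem light_column_round_bound
    {X : Type*} [Fintype X] [Nonempty X] [DecidableEq X]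
    (P : X → ℝ)
    (hPpos : ∀ x, 0 < P x)
    (hPsum : ∑ x, P x = 1)
    (ε δ N : ℝ) (hε0 : 0 < ε) (hε1 : ε < 1) (hδ0 : 0 < δ) (hδ1 : δ < 1) (hN : 1 ≤ N)
    (hstar : X → ℕ)
    (i : ℕ)
    (hseq : ℕ → (X → ℕ))
    (W : ℕ → X → ℝ)
    (hW1 : ∀ x, W 1 x = 0)
    (hWrec : ∀ j : ℕ, 1 ≤ j → ∀ x : X,
      W (j + 1) x = W j x +
        (if hseq j x ≠ hstar x
         then P x / ∑ y ∈ univ.filter (fun y => hseq j y ≠ hstar y), P y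
         else 0))
    (hbad : ∀ j ∈ Finset.Icc 1 i,
      ε ≤ ∑ x ∈ univ.filter (fun x => hseq j x ≠ hstar x), P x)
    (hweight : ∀ j ∈ Finset.Icc 1 i,
      ∑ x ∈ univ.filter (fun x => hseq j x ≠ hstar x), W j x ≤ Real.log (N / δ))
    (hlight : ∃ x : X, W (i + 1) x ≤ Real.log (N / δ) * 2 * P x / ε) :
    (i : ℝ) ≤ (4 * Real.log (N / δ) + 2) / ε :=
  light_column_round_bound_general P hPpos hPsum ε δ N hε0 hδ0 hδ1 hN hstar i hseq W hW1 hWrec hbad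
    hweight
end

section
/- Let X be a finite nonempty example set with probability distribution P (P(x) > 0 for all x), let ε, δ ∈ (0,1) and N ≥ 1 be reals, let h* be a target hypothesis, and let h₁, …, h_m be hypotheses. Define cumulative weights by W₁(x) = 0 and W_{j+1}(x) = W_j(x) + P(x)/P(D(h_j,h*)) if x ∈ D(h_j,h*), W_{j+1}(x) = W_j(x) otherwise. Suppose that for every j with 1 ≤ j ≤ m: P(D(h_j,h*)) ≥ ε (each h_j is ε-bad) and Σ_{x ∈ D(h_j,h*)} W_j(x) ≤ ln(N/δ). Then m ≤ (4·ln(N/δ) + 2)/ε + 1. (This is the deterministic core of the theorem that with probability at least 1−δ, any arbitrary learning algorithm in the PAC-LRC model terminates within O((1/ε)·log(|H|/δ)) rounds.) -/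
/-!
Track the potential `Φ = ∑ₓ W(x)² / P(x)`. A round with disagreement set `D` adds the conditional
probability `P(x) / P(D)` to `W(x)` on `D`, which raises the total weight `∑ₓ W(x)` by exactly one
and raises `Φ` by `(2 ∑_{x ∈ D} W(x) + 1) / P(D) ≤ (2 ln(N/δ) + 1) / ε`. After `m` rounds the total
weight is `m`, so Cauchy–Schwarz against `∑ₓ P(x) = 1` gives `m² ≤ Φ ≤ m (2 ln(N/δ) + 1) / ε`.
-/

open Finset

section

variable {ι : Type*} [Fintype ι] [DecidableEq ι]

noncomputable def condProb (P : ι → ℝ) (D : Finset ι) (x : ι) : ℝ :=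
  if x ∈ D then P x / ∑ y ∈ D, P y else 0

theorem sum_condProb {P : ι → ℝ} {D : Finset ι} (hD : ∑ y ∈ D, P y ≠ 0) :
    ∑ x, condProb P D x = 1 := by
  simp only [condProb, ← sum_filter, filter_mem_eq_inter, univ_inter, ← sum_div, div_self hD]

theorem sum_sq_div_add_condProb {P : ι → ℝ} {D : Finset ι} (hP : ∀ x ∈ D, P x ≠ 0)
    (hD : ∑ y ∈ D, P y ≠ 0) (V : ι → ℝ) :
    ∑ x, (V x + condProb P D x) ^ 2 / P x =
      ∑ x, V x ^ 2 / P x + (2 * ∑ x ∈ D, V x + 1) / ∑ x ∈ D, P x := by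
  have hpointwise : ∀ x, (V x + condProb P D x) ^ 2 / P x =
      V x ^ 2 / P x + if x ∈ D then (2 * V x + P x / ∑ y ∈ D, P y) / ∑ y ∈ D, P y else 0 := by
    intro x
    by_cases hx : x ∈ D
    · simp only [condProb, if_pos hx]
      field_simp [hP x hx]
      ring
    · simp [condProb, hx]
  rw [sum_congr rfl fun x _ => hpointwise x, sum_add_distrib, ← sum_filter, filter_mem_eq_inter,
    univ_inter, ← sum_div, sum_add_distrib, ← mul_sum, ← sum_div, div_self hD]

section Accumulation

variable {P : ι → ℝ} {D : ℕ → Finset ι} {V : ℕ → ι → ℝ} {m : ℕ}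

theorem sum_accumulated_condProb_eq (hV0 : ∀ x, V 0 x = 0)
    (hV : ∀ k x, V (k + 1) x = V k x + condProb P (D k) x)
    (hD : ∀ k < m, ∑ y ∈ D k, P y ≠ 0) :
    ∑ x, V m x = m := by
  induction m with
  | zero => simp [hV0]
  | succ k ih =>
    simp only [hV, sum_add_distrib, sum_condProb (hD k k.lt_succ_self),
      ih fun i hi => hD i (by omega)]
    push_cast
    ring

theorem sum_sq_div_accumulated_condProb_le (hV0 : ∀ x, V 0 x = 0)
    (hV : ∀ k x, V (k + 1) x = V k x + condProb P (D k) x)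
    (hP : ∀ x, P x ≠ 0) (hD : ∀ k < m, ∑ y ∈ D k, P y ≠ 0) {c : ℝ}
    (hc : ∀ k < m, (2 * ∑ x ∈ D k, V k x + 1) / ∑ x ∈ D k, P x ≤ c) :
    ∑ x, V m x ^ 2 / P x ≤ m * c := by
  induction m with
  | zero => simp [hV0]
  | succ k ih =>
    have hstep := hc k k.lt_succ_self
    have hprev := ih (fun i hi => hD i (by omega)) fun i hi => hc i (by omega)
    simp only [hV, sum_sq_div_add_condProb (fun x _ => hP x) (hD k k.lt_succ_self)]
    push_cast
    linarith

theorem natCast_le_of_accumulated_condProb (hV0 : ∀ x, V 0 x = 0)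
    (hV : ∀ k x, V (k + 1) x = V k x + condProb P (D k) x)
    (hP : ∀ x, 0 < P x) (hPsum : ∑ x, P x = 1) (hD : ∀ k < m, ∑ y ∈ D k, P y ≠ 0)
    {c : ℝ} (hc0 : 0 ≤ c)
    (hc : ∀ k < m, (2 * ∑ x ∈ D k, V k x + 1) / ∑ x ∈ D k, P x ≤ c) :
    (m : ℝ) ≤ c := by
  have hCS := sq_sum_div_le_sum_sq_div univ (V m) fun x _ => hP x
  rw [hPsum, div_one, sum_accumulated_condProb_eq hV0 hV hD] at hCS
  have hpot := sum_sq_div_accumulated_condProb_le hV0 hV (fun x => (hP x).ne') hD hc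
  nlinarith

end Accumulation

end

theorem arbitrary_algorithm_round_bound_general
    {X : Type*} [Fintype X]
    (P : X → ℝ)
    (hPpos : ∀ x, 0 < P x)
    (hPsum : ∑ x, P x = 1)
    (ε δ N : ℝ) (hε0 : 0 < ε) (hδ0 : 0 < δ) (hδ1 : δ < 1) (hN : 1 ≤ N)
    (hstar : X → ℕ)
    (m : ℕ)
    (hseq : ℕ → (X → ℕ))
    (W : ℕ → X → ℝ)
    (hW1 : ∀ x, W 1 x = 0)
    (hWrec : ∀ j : ℕ, 1 ≤ j → ∀ x : X,
      W (j + 1) x = W j x +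
        (if hseq j x ≠ hstar x
         then P x / ∑ y ∈ univ.filter (fun y => hseq j y ≠ hstar y), P y
         else 0))
    (hbad : ∀ j ∈ Finset.Icc 1 m,
      ε ≤ ∑ x ∈ univ.filter (fun x => hseq j x ≠ hstar x), P x)
    (hweight : ∀ j ∈ Finset.Icc 1 m,
      ∑ x ∈ univ.filter (fun x => hseq j x ≠ hstar x), W j x ≤ Real.log (N / δ)) :
    (m : ℝ) ≤ (4 * Real.log (N / δ) + 2) / ε + 1 := by
  classical
  set L := Real.log (N / δ)
  have hL : 0 ≤ L := Real.log_nonneg <| (one_le_div₀ hδ0).mpr (by linarith)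
  have hc0 : 0 ≤ (2 * L + 1) / ε := by positivity
  have hround : ∀ k < m, k + 1 ∈ Icc 1 m := fun k hk => mem_Icc.mpr ⟨by omega, by omega⟩
  have hm : (m : ℝ) ≤ (2 * L + 1) / ε := by
    refine natCast_le_of_accumulated_condProb
      (D := fun k => univ.filter fun x => hseq (k + 1) x ≠ hstar x) (V := fun k => W (k + 1))
      hW1 (fun k x => ?_) hPpos hPsum
      (fun k hk => (hε0.trans_le (hbad _ (hround k hk))).ne') hc0 fun k hk => ?_
    · simp [hWrec (k + 1) (by omega), condProb]
    · exact div_le_div₀ (by linarith) (by linarith [hweight _ (hround k hk)]) hε0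
        (hbad _ (hround k hk))
  have hdouble : (4 * L + 2) / ε = 2 * ((2 * L + 1) / ε) := by ring
  linarith

/-- **Deterministic core of the PAC-LRC termination theorem.** If every round
`j ∈ {1,…,m}` uses an `ε`-bad hypothesis `hⱼ` whose total accumulated weight is at most
`ln (N/δ)`, then `m ≤ (4·ln(N/δ) + 2)/ε + 1`. -/
theorem arbitrary_algorithm_round_bound
    {X : Type*} [Fintype X] [Nonempty X] [DecidableEq X]
    (P : X → ℝ)
    (hPpos : ∀ x, 0 < P x)
    (hPsum : ∑ x, P x = 1)
    (ε δ N : ℝ) (hε0 : 0 < ε) (hε1 : ε < 1) (hδ0 : 0 < δ) (hδ1 : δ < 1) (hN : 1 ≤ N)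
    (hstar : X → ℕ)
    (m : ℕ)
    (hseq : ℕ → (X → ℕ))
    (W : ℕ → X → ℝ)
    (hW1 : ∀ x, W 1 x = 0)
    (hWrec : ∀ j : ℕ, 1 ≤ j → ∀ x : X,
      W (j + 1) x = W j x +
        (if hseq j x ≠ hstar x
         then P x / ∑ y ∈ univ.filter (fun y => hseq j y ≠ hstar y), P y
         else 0))
    (hbad : ∀ j ∈ Finset.Icc 1 m,
      ε ≤ ∑ x ∈ univ.filter (fun x => hseq j x ≠ hstar x), P x)
    (hweight : ∀ j ∈ Finset.Icc 1 m,
      ∑ x ∈ univ.filter (fun x => hseq j x ≠ hstar x), W j x ≤ Real.log (N / δ)) :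
    (m : ℝ) ≤ (4 * Real.log (N / δ) + 2) / ε + 1 :=
  arbitrary_algorithm_round_bound_general P hPpos hPsum ε δ N hε0 hδ0 hδ1 hN hstar m hseq W hW1
    hWrec hbad hweight
end
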